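/- arXiv:2503.11250 — 3 statements merged into one kernel-verified Lean document; each statement's English description precedes it below -/
import Mathlib

section
/- Let m, a ∈ ℝ and b, s > 0. Then ∫_ℝ Φ((x − a)/b) · (1/s)·φ((x − m)/s) dx = Φ( (m − a)/√(s² + b²) ), i.e. for X ∼ N(m, s²) one has E[ Φ((X − a)/b) ] = Φ( (m − a)/√(s² + b²) ). -/
open MeasureTheory ProbabilityTheory Set Filter Real Topology

noncomputable section

/-- The standard normal distribution `N(0,1)` on `ℝ`. -/
def stdNormal : Measure ℝ := gaussianReal 0 1

/-- The standard normal CDF `Φ`. -/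
def Phi (x : ℝ) : ℝ := (stdNormal (Iic x)).toReal

/-- The standard normal PDF `φ`. -/
def stdPDF (x : ℝ) : ℝ := (Real.sqrt (2 * Real.pi))⁻¹ * Real.exp (-(x ^ 2) / 2)

/-- The CDF of the normal distribution `N(μ, σ²)`: `Φ_{μ,σ²}(u) = Φ((u - μ)/σ)`. -/
def normCDF (μ σ : ℝ) (u : ℝ) : ℝ := Phi ((u - μ) / σ)

/-- The normal distribution `N(μ, σ²)` as a measure on `ℝ`. -/
def gaussMeasure (μ σ : ℝ) : Measure ℝ := gaussianReal μ ⟨σ ^ 2, sq_nonneg σ⟩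

/-- Threshold-weighted CRPS of a predictive CDF `F` at observation `y`, with weighting
measure `γ`: `∫ (F u - 1{y ≤ u})² dγ(u)`. -/
def twCRPS (γ : Measure ℝ) (F : ℝ → ℝ) (y : ℝ) : ℝ :=
  ∫ u, (F u - (Ici y).indicator (fun _ => (1 : ℝ)) u) ^ 2 ∂γ

/-- Expected threshold-weighted CRPS of the Gaussian `N(μ, σ²)` with weighting measure `γ`:
the expectation of `y ↦ CRPS_γ(Φ_{μ,σ²}, y)` for `y ∼ N(μ, σ²)`. -/
def etwCRPS (γ : Measure ℝ) (μ σ : ℝ) : ℝ :=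
  ∫ y, twCRPS γ (normCDF μ σ) y ∂(gaussMeasure μ σ)

/-- `γ₁`: the Borel measure on `ℝ` with Lebesgue density `u ↦ 1{u ≥ t}`. -/
def gamma1 (t : ℝ) : Measure ℝ :=
  volume.withDensity ((Ici t).indicator fun _ => (1 : ENNReal))

/-- `γ₂`: the Borel measure on `ℝ` with Lebesgue density `u ↦ (1/σγ) φ((u - t)/σγ)`. -/
def gamma2 (t σγ : ℝ) : Measure ℝ :=
  volume.withDensity fun u => ENNReal.ofReal (1 / σγ * stdPDF ((u - t) / σγ))

end

lemma stdPDF_nonneg (x : ℝ) : 0 ≤ stdPDF x := by unfold stdPDF; positivity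

lemma stdPDF_le (x : ℝ) : stdPDF x ≤ (Real.sqrt (2 * π))⁻¹ := by
  unfold stdPDF
  have h1 : Real.exp (-(x ^ 2) / 2) ≤ 1 := Real.exp_le_one_iff.2 (by nlinarith [sq_nonneg x])
  have h2 : (0:ℝ) ≤ (Real.sqrt (2 * π))⁻¹ := by positivity
  nlinarith

lemma continuous_stdPDF : Continuous stdPDF := by unfold stdPDF; fun_prop

lemma stdPDF_eq_gaussian : stdPDF = gaussianPDFReal 0 1 := by
  ext x; simp [stdPDF, gaussianPDFReal]

lemma integrable_stdPDF : Integrable stdPDF := stdPDF_eq_gaussian ▸ integrable_gaussianPDFReal 0 1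

lemma Phi_eq (x : ℝ) : Phi x = ∫ t in Iic x, stdPDF t := by
  rw [Phi, stdNormal, gaussianReal_apply_eq_integral 0 one_ne_zero, ENNReal.toReal_ofReal,
    stdPDF_eq_gaussian]
  exact setIntegral_nonneg measurableSet_Iic fun t _ => gaussianPDFReal_nonneg 0 1 t

instance : IsProbabilityMeasure stdNormal := inferInstanceAs (IsProbabilityMeasure (gaussianReal 0 1))

lemma Phi_nonneg (x : ℝ) : 0 ≤ Phi x := ENNReal.toReal_nonneg

lemma Phi_le_one (x : ℝ) : Phi x ≤ 1 := by
  have h := prob_le_one (μ := stdNormal) (s := Iic x)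
  calc Phi x ≤ (1 : ENNReal).toReal := ENNReal.toReal_mono ENNReal.one_ne_top h
  _ = 1 := by simp

lemma hasDerivAt_Phi (x : ℝ) : HasDerivAt Phi (stdPDF x) x := by
  have h : ∀ y : ℝ, Phi y = (∫ t in Iic (0:ℝ), stdPDF t) + ∫ t in (0:ℝ)..y, stdPDF t := by
    intro y
    rw [Phi_eq, ← intervalIntegral.integral_Iic_sub_Iic integrable_stdPDF.integrableOn
      integrable_stdPDF.integrableOn]
    ring
  have hd : HasDerivAt (fun y : ℝ => (∫ t in Iic (0:ℝ), stdPDF t) + ∫ t in (0:ℝ)..y, stdPDF t)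
      (stdPDF x) x := by
    refine HasDerivAt.const_add _ ?_
    exact intervalIntegral.integral_hasDerivAt_right
      (integrable_stdPDF.intervalIntegrable)
      (continuous_stdPDF.stronglyMeasurable.stronglyMeasurableAtFilter)
      continuous_stdPDF.continuousAt
  exact (funext h : Phi = _) ▸ hd

lemma continuous_Phi : Continuous Phi :=
  continuous_iff_continuousAt.2 fun x => (hasDerivAt_Phi x).continuousAt

lemma Phi_tendsto_atBot : Tendsto Phi atBot (𝓝 0) := by
  have h0 : (∫ t : ℝ, (0:ℝ)) = 0 := integral_zero _ _
  have h : Tendsto (fun x : ℝ => ∫ t, (Iic x).indicator stdPDF t) atBot (𝓝 (∫ t : ℝ, (0:ℝ))) := by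
    apply tendsto_integral_filter_of_dominated_convergence stdPDF
    · filter_upwards with x
      exact (continuous_stdPDF.aestronglyMeasurable).indicator measurableSet_Iic
    · filter_upwards with x
      filter_upwards with t
      calc ‖(Iic x).indicator stdPDF t‖
          = (Iic x).indicator (fun u => ‖stdPDF u‖) t := norm_indicator_eq_indicator_norm _ _
        _ ≤ ‖stdPDF t‖ := indicator_le_self' (fun u _ => norm_nonneg _) t
        _ = stdPDF t := Real.norm_of_nonneg (stdPDF_nonneg t)
    · exact integrable_stdPDF
    · filter_upwards with t
      have hev : ∀ᶠ x in atBot, (Iic x).indicator stdPDF t = 0 := by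
        filter_upwards [eventually_lt_atBot t] with x hx
        exact indicator_of_notMem (by simpa using hx.not_ge) _
      exact tendsto_const_nhds.congr' (hev.mono fun x hx => hx.symm)
  rw [h0] at h
  refine h.congr fun x => ?_
  rw [Phi_eq, integral_indicator measurableSet_Iic]

lemma conv_pdf (a m b s : ℝ) (hb : 0 < b) (hs : 0 < s) :
    (∫ x, (1 / b * stdPDF ((x - a) / b)) * (1 / s * stdPDF ((x - m) / s)))
      = 1 / Real.sqrt (s ^ 2 + b ^ 2) * stdPDF ((a - m) / Real.sqrt (s ^ 2 + b ^ 2)) := by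
  set r := Real.sqrt (s ^ 2 + b ^ 2) with hr
  have hr2 : r ^ 2 = s ^ 2 + b ^ 2 := Real.sq_sqrt (by positivity)
  have hrpos : 0 < r := Real.sqrt_pos.2 (by positivity)
  have hb' : b ≠ 0 := hb.ne'
  have hs' : s ≠ 0 := hs.ne'
  have hr0 : r ≠ 0 := hrpos.ne'
  have hsb : s ^ 2 + b ^ 2 ≠ 0 := by positivity
  set c : ℝ := (a * s ^ 2 + m * b ^ 2) / (s ^ 2 + b ^ 2) with hc
  set q : ℝ := (s ^ 2 + b ^ 2) / (2 * b ^ 2 * s ^ 2) with hq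
  have hqpos : 0 < q := by positivity
  have hsqrt2pi : Real.sqrt (2 * π) * Real.sqrt (2 * π) = 2 * π :=
    Real.mul_self_sqrt (by positivity)
  have ht : Real.sqrt (2 * π) ≠ 0 := by positivity
  have key : ∀ x : ℝ, (1 / b * stdPDF ((x - a) / b)) * (1 / s * stdPDF ((x - m) / s))
      = (1 / (b * s) * (2 * π)⁻¹ * Real.exp (-((a - m) ^ 2) / (2 * (s ^ 2 + b ^ 2))))
        * Real.exp (-q * (x - c) ^ 2) := by
    intro x
    unfold stdPDF
    rw [show (1 / b * ((Real.sqrt (2 * π))⁻¹ * Real.exp (-(((x - a) / b) ^ 2) / 2)))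
        * (1 / s * ((Real.sqrt (2 * π))⁻¹ * Real.exp (-(((x - m) / s) ^ 2) / 2)))
      = (1 / (b * s) * ((Real.sqrt (2 * π))⁻¹ * (Real.sqrt (2 * π))⁻¹))
        * (Real.exp (-(((x - a) / b) ^ 2) / 2) * Real.exp (-(((x - m) / s) ^ 2) / 2)) by ring]
    rw [← Real.exp_add, ← mul_inv, hsqrt2pi]
    conv_rhs => rw [mul_assoc, ← Real.exp_add]
    congr 1
    rw [hq, hc]
    congr 1
    have h2sb : s ^ 2 * 2 + b ^ 2 * 2 ≠ 0 := by intro h; exact hsb (by linarith)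
    field_simp
    ring
  rw [integral_congr_ae (ae_of_all _ key), integral_const_mul]
  have hint : (∫ x : ℝ, Real.exp (-q * (x - c) ^ 2)) = ∫ x : ℝ, Real.exp (-q * x ^ 2) :=
    integral_sub_right_eq_self (fun x => Real.exp (-q * x ^ 2)) c
  rw [hint, integral_gaussian]
  have hpq : Real.sqrt (π / q) = Real.sqrt (2 * π) * (b * s / r) := by
    rw [show π / q = (2 * π) * (b * s / r) ^ 2 by
      rw [hq, div_pow, hr2]; field_simp,
      Real.sqrt_mul (by positivity), Real.sqrt_sq (by positivity)]
  rw [hpq]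
  unfold stdPDF
  rw [show -(((a - m) / r) ^ 2) / 2 = -((a - m) ^ 2) / (2 * (s ^ 2 + b ^ 2)) by
    rw [div_pow, hr2]; field_simp]
  set E := Real.exp (-((a - m) ^ 2) / (2 * (s ^ 2 + b ^ 2))) with hE
  rw [← hsqrt2pi]
  field_simp
  ring_nf
  rw [Real.sq_sqrt (by positivity)]

lemma gpdf_eq (m s : ℝ) (hs : 0 < s) :
    (fun x => 1 / s * stdPDF ((x - m) / s)) = gaussianPDFReal m ⟨s ^ 2, sq_nonneg s⟩ := by
  ext x
  simp only [stdPDF, gaussianPDFReal, NNReal.coe_mk]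
  have hs' : s ≠ 0 := hs.ne'
  change 1 / s * ((√(2 * π))⁻¹ * rexp (-((x - m) / s) ^ 2 / 2)) = (√(2 * π * s ^ 2))⁻¹ * rexp (-(x - m) ^ 2 / (2 * s ^ 2))
  rw [show 2 * π * s ^ 2 = (2 * π) * s ^ 2 by ring,
    Real.sqrt_mul (show (0:ℝ) ≤ 2 * π by positivity) (s ^ 2), Real.sqrt_sq hs.le]
  rw [show -(((x - m) / s) ^ 2) / 2 = -(x - m) ^ 2 / (2 * s ^ 2) by
    rw [div_pow]; field_simp]
  have ht : Real.sqrt (2 * π) ≠ 0 := by positivity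
  field_simp

lemma integrable_g (m s : ℝ) (hs : 0 < s) :
    Integrable (fun x => 1 / s * stdPDF ((x - m) / s)) :=
  (gpdf_eq m s hs) ▸ integrable_gaussianPDFReal m ⟨s ^ 2, sq_nonneg s⟩

lemma F_eq_G (m a b s : ℝ) (hb : 0 < b) (hs : 0 < s) :
    (∫ x, Phi ((x - a) / b) * (1 / s * stdPDF ((x - m) / s)))
      = Phi ((m - a) / Real.sqrt (s ^ 2 + b ^ 2)) := by
  set r := Real.sqrt (s ^ 2 + b ^ 2) with hr
  have hrpos : 0 < r := Real.sqrt_pos.2 (by positivity)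
  set g : ℝ → ℝ := fun x => 1 / s * stdPDF ((x - m) / s) with hgdef
  have hg_int : Integrable g := integrable_g m s hs
  have hg_nonneg : ∀ x, 0 ≤ g x := fun x =>
    mul_nonneg (by positivity) (stdPDF_nonneg _)
  have hg_cont : Continuous g := by
    apply Continuous.mul continuous_const
    exact continuous_stdPDF.comp (by fun_prop)
  set F : ℝ → ℝ := fun t => ∫ x, Phi ((x - t) / b) * g x with hFdef
  set G : ℝ → ℝ := fun t => Phi ((m - t) / r) with hGdef
  -- continuity facts
  have hPhiComp : ∀ t : ℝ, Continuous fun x => Phi ((x - t) / b) := fun t =>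
    continuous_Phi.comp (by fun_prop)
  have hF_int : ∀ t : ℝ, Integrable fun x => Phi ((x - t) / b) * g x := by
    intro t
    refine hg_int.mono' (((hPhiComp t).mul hg_cont).aestronglyMeasurable) ?_
    filter_upwards with x
    rw [Real.norm_of_nonneg (mul_nonneg (Phi_nonneg _) (hg_nonneg x))]
    calc Phi ((x - t) / b) * g x ≤ 1 * g x :=
          mul_le_mul_of_nonneg_right (Phi_le_one _) (hg_nonneg x)
      _ = g x := one_mul _
  -- derivative of F
  have hF' : ∀ t : ℝ, HasDerivAt F (-(1 / r * stdPDF ((t - m) / r))) t := by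
    intro t
    have h := hasDerivAt_integral_of_dominated_loc_of_deriv_le (μ := volume) (x₀ := t)
      (F := fun t x => Phi ((x - t) / b) * g x)
      (F' := fun t x => -((1 / b * stdPDF ((x - t) / b)) * g x))
      (bound := fun x => 1 / b * (Real.sqrt (2 * π))⁻¹ * g x)
      (Metric.ball_mem_nhds t zero_lt_one)
      (by filter_upwards with u using ((hPhiComp u).mul hg_cont).aestronglyMeasurable)
      (hF_int t)
      (by
        apply Continuous.aestronglyMeasurable
        exact ((continuous_const.mul (continuous_stdPDF.comp (by fun_prop))).mul hg_cont).neg)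
      (by
        filter_upwards with x u _
        rw [norm_neg, Real.norm_of_nonneg (mul_nonneg
          (mul_nonneg (by positivity) (stdPDF_nonneg _)) (hg_nonneg x))]
        have : stdPDF ((x - u) / b) ≤ (Real.sqrt (2 * π))⁻¹ := stdPDF_le _
        have hb1 : (0:ℝ) ≤ 1 / b := by positivity
        calc 1 / b * stdPDF ((x - u) / b) * g x
            ≤ 1 / b * (Real.sqrt (2 * π))⁻¹ * g x := by
              apply mul_le_mul_of_nonneg_right _ (hg_nonneg x)
              exact mul_le_mul_of_nonneg_left this hb1
          _ = 1 / b * (Real.sqrt (2 * π))⁻¹ * g x := rfl)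
      (hg_int.const_mul _)
      (by
        filter_upwards with x u _
        have h1 : HasDerivAt (fun u : ℝ => (x - u) / b) (-1 / b) u := by
          simpa using ((hasDerivAt_const u x).sub (hasDerivAt_id u)).div_const b
        have h2 : HasDerivAt (fun u : ℝ => Phi ((x - u) / b))
            (stdPDF ((x - u) / b) * (-1 / b)) u := (hasDerivAt_Phi _).comp u h1
        have h3 := h2.mul_const (g x)
        convert h3 using 1
        · rfl
        ring)
    have h2 := h.2
    have heq : (∫ x, -((1 / b * stdPDF ((x - t) / b)) * g x))
        = -(1 / r * stdPDF ((t - m) / r)) := by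
      rw [integral_neg, hgdef]
      simp only
      rw [conv_pdf t m b s hb hs, ← hr]
    rwa [heq] at h2
  -- derivative of G
  have hG' : ∀ t : ℝ, HasDerivAt G (-(1 / r * stdPDF ((t - m) / r))) t := by
    intro t
    have h1 : HasDerivAt (fun u : ℝ => (m - u) / r) (-1 / r) t := by
      simpa using ((hasDerivAt_const t m).sub (hasDerivAt_id t)).div_const r
    have h2 : HasDerivAt G (stdPDF ((m - t) / r) * (-1 / r)) t := (hasDerivAt_Phi _).comp t h1
    have heven : stdPDF ((m - t) / r) = stdPDF ((t - m) / r) := by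
      unfold stdPDF
      congr 2
      ring
    rw [heven] at h2
    convert h2 using 1
    ring
  -- F - G has zero derivative hence is constant
  have hFG : ∀ t : ℝ, F t - G t = F 0 - G 0 := by
    intro t
    have hdiff : Differentiable ℝ (fun t => F t - G t) := fun u =>
      ((hF' u).sub (hG' u)).differentiableAt
    have hderiv : ∀ u : ℝ, deriv (fun t => F t - G t) u = 0 := by
      intro u
      have := ((hF' u).sub (hG' u))
      rw [show (fun t => F t - G t) = F - G from rfl, this.deriv, sub_self]
    exact is_const_of_deriv_eq_zero hdiff hderiv t 0
  -- limits at +∞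
  have hFlim : Tendsto F atTop (𝓝 0) := by
    have h0 : (∫ x : ℝ, (0:ℝ)) = 0 := integral_zero _ _
    have h : Tendsto (fun t : ℝ => ∫ x, Phi ((x - t) / b) * g x) atTop (𝓝 (∫ x : ℝ, (0:ℝ))) := by
      apply tendsto_integral_filter_of_dominated_convergence g
      · filter_upwards with t
        exact ((hPhiComp t).mul hg_cont).aestronglyMeasurable
      · filter_upwards with t
        filter_upwards with x
        rw [Real.norm_of_nonneg (mul_nonneg (Phi_nonneg _) (hg_nonneg x))]
        calc Phi ((x - t) / b) * g x ≤ 1 * g x :=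
              mul_le_mul_of_nonneg_right (Phi_le_one _) (hg_nonneg x)
          _ = g x := one_mul _
      · exact hg_int
      · filter_upwards with x
        have harg : Tendsto (fun t : ℝ => (x - t) / b) atTop atBot := by
          apply Tendsto.atBot_div_const hb
          exact (tendsto_atBot_add_const_left atTop x tendsto_neg_atTop_atBot).congr fun t => (sub_eq_add_neg x t).symm
        have hP : Tendsto (fun t : ℝ => Phi ((x - t) / b)) atTop (𝓝 0) :=
          Phi_tendsto_atBot.comp harg
        simpa using hP.mul_const (g x)
    rw [h0] at h
    exact h
  have hGlim : Tendsto G atTop (𝓝 0) := by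
    have harg : Tendsto (fun t : ℝ => (m - t) / r) atTop atBot := by
      apply Tendsto.atBot_div_const hrpos
      exact (tendsto_atBot_add_const_left atTop m tendsto_neg_atTop_atBot).congr fun t => (sub_eq_add_neg m t).symm
    exact Phi_tendsto_atBot.comp harg
  have hconst : Tendsto (fun t => F t - G t) atTop (𝓝 (F 0 - G 0)) := by
    refine Tendsto.congr (fun t => (hFG t).symm) tendsto_const_nhds
  have h0' : F 0 - G 0 = 0 := tendsto_nhds_unique hconst (by simpa using hFlim.sub hGlim)
  have : F a - G a = 0 := (hFG a).trans h0'
  have hFa : F a = G a := by linarith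
  exact hFa

theorem stmt_10 (m a b s : ℝ) (hb : 0 < b) (hs : 0 < s) :
    (∫ x, Phi ((x - a) / b) * (1 / s * stdPDF ((x - m) / s))) =
        Phi ((m - a) / Real.sqrt (s ^ 2 + b ^ 2)) ∧
      ∫ x, Phi ((x - a) / b) ∂(gaussMeasure m s) =
        Phi ((m - a) / Real.sqrt (s ^ 2 + b ^ 2)) := by
  constructor
  · exact F_eq_G m a b s hb hs
  · have hv : (⟨s ^ 2, sq_nonneg s⟩ : NNReal) ≠ 0 := by
      intro h
      have : s ^ 2 = 0 := congrArg NNReal.toReal h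
      exact hs.ne' (by nlinarith)
    rw [gaussMeasure, gaussianReal_of_var_ne_zero _ hv]
    rw [show gaussianPDF m ⟨s ^ 2, sq_nonneg s⟩
        = fun x => ((Real.toNNReal (gaussianPDFReal m ⟨s ^ 2, sq_nonneg s⟩ x) : NNReal) : ENNReal)
      from rfl]
    rw [integral_withDensity_eq_integral_smul
      ((measurable_gaussianPDFReal m ⟨s ^ 2, sq_nonneg s⟩).real_toNNReal) _]
    have hcong : (∫ x, Real.toNNReal (gaussianPDFReal m ⟨s ^ 2, sq_nonneg s⟩ x)
          • Phi ((x - a) / b))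
        = ∫ x, Phi ((x - a) / b) * (1 / s * stdPDF ((x - m) / s)) := by
      apply integral_congr_ae
      filter_upwards with x
      have e1 : ((Real.toNNReal (gaussianPDFReal m ⟨s ^ 2, sq_nonneg s⟩ x) : NNReal) : ℝ)
          = gaussianPDFReal m ⟨s ^ 2, sq_nonneg s⟩ x := Real.coe_toNNReal _ (gaussianPDFReal_nonneg _ _ _)
      rw [NNReal.smul_def, e1, smul_eq_mul,
        show gaussianPDFReal m ⟨s ^ 2, sq_nonneg s⟩ x = 1 / s * stdPDF ((x - m) / s) from
          (congrFun (gpdf_eq m s hs) x).symm, mul_comm]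
    rw [hcong]
    exact F_eq_G m a b s hb hs
end

section
/- Let μ ∈ ℝ, σ > 0, t ∈ ℝ and σ_γ > 0. Then the expected threshold-weighted CRPS with Gaussian weighting measure γ₂ centered at t with scale σ_γ is symmetric in the predictive mean about the threshold: CRPS_{γ₂}(Φ_{μ,σ²}) = CRPS_{γ₂}(Φ_{2t−μ, σ²}). -/
open MeasureTheory ProbabilityTheory Set

lemma Phi_neg (x : ℝ) : Phi (-x) = 1 - Phi x := by
  have hmap := gaussianReal_map_const_mul (μ := 0) (v := 1) (-1 : ℝ)
  have hv : (NNReal.mk ((-1:ℝ)^2) (sq_nonneg _) * 1 : NNReal) = 1 := by ext; norm_num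
  rw [hv, mul_zero] at hmap
  have hP : IsProbabilityMeasure stdNormal :=
    inferInstanceAs (IsProbabilityMeasure (gaussianReal 0 1))
  have h1 : stdNormal (Iic (-x)) = stdNormal (Ici x) := by
    conv_lhs => rw [stdNormal, ← hmap]
    rw [Measure.map_apply (measurable_const_mul _) measurableSet_Iic]
    congr 1; ext y; simp [mem_Iic, mem_Ici]
  have h2 : stdNormal (Iic x) + stdNormal (Ici x) = 1 + stdNormal {x} := by
    have := measure_union_add_inter (μ := stdNormal) (Iic x) (measurableSet_Ici (a := x))
    rw [Iic_union_Ici, Iic_inter_Ici, Icc_self] at this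
    rw [← this, measure_univ]
  have h3 : stdNormal {x} = 0 :=
    gaussianReal_absolutelyContinuous 0 one_ne_zero (measure_singleton x)
  rw [h3, add_zero] at h2
  have ha := measure_ne_top stdNormal (Iic x)
  have hb := measure_ne_top stdNormal (Ici x)
  unfold Phi
  rw [h1]
  have := congrArg ENNReal.toReal h2
  rw [ENNReal.toReal_add ha hb, ENNReal.toReal_one] at this
  linarith

lemma stdPDF_neg (x : ℝ) : stdPDF (-x) = stdPDF x := by
  unfold stdPDF; ring_nf

lemma normCDF_reflect (μ σ t u : ℝ) :
    normCDF (2 * t - μ) σ (2 * t - u) = 1 - normCDF μ σ u := by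
  unfold normCDF
  rw [show (2 * t - u - (2 * t - μ)) / σ = -((u - μ) / σ) by ring, Phi_neg]

lemma twCRPS_reflect (μ σ t σγ y : ℝ) :
    twCRPS (gamma2 t σγ) (normCDF (2 * t - μ) σ) (2 * t - y)
      = twCRPS (gamma2 t σγ) (normCDF μ σ) y := by
  set w : ℝ → NNReal := fun u => (1 / σγ * stdPDF ((u - t) / σγ)).toNNReal with hw_def
  have hcont : Continuous fun u : ℝ => 1 / σγ * stdPDF ((u - t) / σγ) := by
    unfold stdPDF; fun_prop
  have hw : Measurable w := hcont.measurable.real_toNNReal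
  have hγ : gamma2 t σγ = volume.withDensity fun u => (w u : ENNReal) := rfl
  unfold twCRPS
  rw [hγ, integral_withDensity_eq_integral_smul hw, integral_withDensity_eq_integral_smul hw]
  rw [← integral_sub_left_eq_self
    (fun u => w u • (normCDF (2 * t - μ) σ u
        - (Ici (2 * t - y)).indicator (fun _ => (1 : ℝ)) u) ^ 2) volume (2 * t)]
  refine integral_congr_ae ?_
  have hae : ∀ᵐ u : ℝ, u ≠ y := by
    rw [ae_iff]
    have : {a : ℝ | ¬ a ≠ y} = {y} := by ext a; simp
    rw [this]; exact measure_singleton y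
  filter_upwards [hae] with u hu
  have hwu : w (2 * t - u) = w u := by
    simp only [hw_def]
    rw [show (2 * t - u - t) / σγ = -((u - t) / σγ) by ring, stdPDF_neg]
  rw [hwu, normCDF_reflect]
  congr 1
  rcases lt_or_gt_of_ne hu with h | h
  · rw [indicator_of_mem (by simp [mem_Ici]; linarith), indicator_of_notMem (by simp [mem_Ici]; linarith)]
    ring
  · rw [indicator_of_notMem (by simp [mem_Ici]; linarith), indicator_of_mem (by simp [mem_Ici]; linarith)]
    ring

lemma gaussianPDFReal_reflect (μ t y : ℝ) (v : NNReal) :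
    gaussianPDFReal (2 * t - μ) v (2 * t - y) = gaussianPDFReal μ v y := by
  unfold gaussianPDFReal
  ring_nf

theorem stmt_14 (μ σ t σγ : ℝ) (hσ : 0 < σ) (hσγ : 0 < σγ) :
    etwCRPS (gamma2 t σγ) μ σ = etwCRPS (gamma2 t σγ) (2 * t - μ) σ := by
  have hσ2 : (0:ℝ) < σ ^ 2 := by positivity
  have hv : (⟨σ ^ 2, sq_nonneg σ⟩ : NNReal) ≠ 0 := by
    intro h
    have := congrArg NNReal.toReal h
    change σ ^ 2 = 0 at this
    linarith
  set v : NNReal := ⟨σ ^ 2, sq_nonneg σ⟩ with hvdef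
  have hq : ∀ m : ℝ, Measurable fun y => (gaussianPDFReal m v y).toNNReal :=
    fun m => (measurable_gaussianPDFReal m v).real_toNNReal
  have hmeas : ∀ m : ℝ, gaussMeasure m σ
      = volume.withDensity fun y => ((gaussianPDFReal m v y).toNNReal : ENNReal) := by
    intro m
    rw [gaussMeasure, ← hvdef, gaussianReal_of_var_ne_zero _ hv]
    rfl
  unfold etwCRPS
  rw [hmeas, hmeas, integral_withDensity_eq_integral_smul (hq μ),
    integral_withDensity_eq_integral_smul (hq (2 * t - μ)),
    ← integral_sub_left_eq_self
      (fun y => (gaussianPDFReal (2 * t - μ) v y).toNNReal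
        • twCRPS (gamma2 t σγ) (normCDF (2 * t - μ) σ) y) volume (2 * t)]
  refine integral_congr_ae (Filter.Eventually.of_forall fun y => ?_)
  simp only
  rw [gaussianPDFReal_reflect, twCRPS_reflect]
end

section
/- Let σ > 0 and t ∈ ℝ, and let γ₁ be the Borel measure on ℝ with Lebesgue density u ↦ 1{u ≥ t}. Then the expected threshold-weighted CRPS μ ↦ CRPS_{γ₁}(Φ_{μ,σ²}) is strictly increasing on ℝ: for all μ < μ′, CRPS_{γ₁}(Φ_{μ,σ²}) < CRPS_{γ₁}(Φ_{μ′,σ²}). -/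
open MeasureTheory ProbabilityTheory Set

open scoped NNReal ENNReal

section Helpers

lemma gamma1_eq (t : ℝ) : gamma1 t = volume.restrict (Ici t) := by
  rw [gamma1]
  exact MeasureTheory.withDensity_indicator_one measurableSet_Ici

lemma cs_lemma (c m : ℝ) {v : ℝ≥0} (hv : v ≠ 0) (u : ℝ) :
    Real.exp (c*u) * gaussianPDFReal m v u
      = Real.exp (c*m + c^2*v/2) * gaussianPDFReal (m + c*v) v u := by
  have hv' : (0:ℝ) < (v:ℝ) := by
    exact_mod_cast hv.bot_lt
  unfold gaussianPDFReal
  rw [mul_left_comm, mul_left_comm (Real.exp (c*m + c^2*v/2)), ← Real.exp_add, ← Real.exp_add]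
  congr 1
  field_simp
  ring

lemma stdNormal_Iic_pos (x : ℝ) : 0 < stdNormal (Iic x) := by
  rw [stdNormal, gaussianReal_apply 0 one_ne_zero]
  rw [lintegral_pos_iff_support (measurable_gaussianPDF 0 1)]
  have hsupp : Function.support (gaussianPDF 0 1) = univ := by
    ext u
    simp [Function.mem_support, (gaussianPDF_pos 0 one_ne_zero u).ne']
  rw [hsupp, Measure.restrict_apply_univ, Real.volume_Iic]
  exact ENNReal.zero_lt_top

lemma stdNormal_Ioi_pos (x : ℝ) : 0 < stdNormal (Ioi x) := by
  rw [stdNormal, gaussianReal_apply 0 one_ne_zero]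
  rw [lintegral_pos_iff_support (measurable_gaussianPDF 0 1)]
  have hsupp : Function.support (gaussianPDF 0 1) = univ := by
    ext u
    simp [Function.mem_support, (gaussianPDF_pos 0 one_ne_zero u).ne']
  rw [hsupp, Measure.restrict_apply_univ, Real.volume_Ioi]
  exact ENNReal.zero_lt_top

instance inst_s16 : IsProbabilityMeasure stdNormal := by
  rw [stdNormal]; infer_instance

lemma Phi_add_eq_one (x : ℝ) : Phi x + (stdNormal (Ioi x)).toReal = 1 := by
  have h := measure_add_measure_compl (μ := stdNormal) (measurableSet_Iic (a := x))
  rw [compl_Iic, measure_univ] at h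
  rw [Phi, ← ENNReal.toReal_add (measure_ne_top _ _) (measure_ne_top _ _), h, ENNReal.toReal_one]

lemma Phi_pos (x : ℝ) : 0 < Phi x :=
  ENNReal.toReal_pos (stdNormal_Iic_pos x).ne' (measure_ne_top _ _)

lemma Phi_lt_one (x : ℝ) : Phi x < 1 := by
  have h := Phi_add_eq_one x
  have h2 : 0 < (stdNormal (Ioi x)).toReal :=
    ENNReal.toReal_pos (stdNormal_Ioi_pos x).ne' (measure_ne_top _ _)
  linarith

lemma monotone_Phi : Monotone Phi := by
  intro a b hab
  exact ENNReal.toReal_mono (measure_ne_top _ _) (measure_mono (Iic_subset_Iic.2 hab))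

lemma measurable_Phi : Measurable Phi := monotone_Phi.measurable

lemma one_sub_Phi (x : ℝ) : 1 - Phi x = (stdNormal (Ioi x)).toReal := by
  have h := Phi_add_eq_one x; linarith

lemma Phi_le (x : ℝ) : Phi x ≤ Real.exp (x + 1/2) := by
  have key : stdNormal (Iic x) ≤ ENNReal.ofReal (Real.exp (x + 1/2)) := by
    rw [stdNormal, gaussianReal_apply 0 one_ne_zero]
    calc ∫⁻ u in Iic x, gaussianPDF 0 1 u
        ≤ ∫⁻ u in Iic x, ENNReal.ofReal (Real.exp (x + 1/2) * gaussianPDFReal (-1) 1 u) := by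
          refine setLIntegral_mono (ENNReal.measurable_ofReal.comp (measurable_const.mul (measurable_gaussianPDFReal _ _))) (fun u hu => ?_)
          rw [gaussianPDF]
          refine ENNReal.ofReal_le_ofReal ?_
          have h1 : gaussianPDFReal 0 1 u ≤ Real.exp (x - u) * gaussianPDFReal 0 1 u :=
            le_mul_of_one_le_left (gaussianPDFReal_nonneg 0 1 u)
              (Real.one_le_exp (by simpa using sub_nonneg.2 (mem_Iic.1 hu)))
          have h2 := cs_lemma (-1) 0 one_ne_zero u
          simp only [neg_mul, one_mul, mul_zero, zero_add, neg_neg, NNReal.coe_one, mul_one,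
            neg_zero, even_two, Even.neg_pow, one_pow] at h2
          calc gaussianPDFReal 0 1 u ≤ Real.exp (x - u) * gaussianPDFReal 0 1 u := h1
            _ = Real.exp x * (Real.exp (-u) * gaussianPDFReal 0 1 u) := by
                rw [← mul_assoc, ← Real.exp_add]; ring_nf
            _ = Real.exp (x + 1/2) * gaussianPDFReal (-1) 1 u := by
                rw [h2, ← mul_assoc, ← Real.exp_add]
      _ ≤ ∫⁻ u, ENNReal.ofReal (Real.exp (x + 1/2) * gaussianPDFReal (-1) 1 u) :=
          setLIntegral_le_lintegral _ _
      _ = ENNReal.ofReal (Real.exp (x + 1/2)) := by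
          simp_rw [ENNReal.ofReal_mul (Real.exp_nonneg _)]
          rw [lintegral_const_mul' _ _ ENNReal.ofReal_ne_top,
            lintegral_gaussianPDFReal_eq_one (-1) one_ne_zero, mul_one]
  exact ENNReal.toReal_le_of_le_ofReal (Real.exp_nonneg _) key

lemma one_sub_Phi_le (x : ℝ) : 1 - Phi x ≤ Real.exp (-x + 1/2) := by
  rw [one_sub_Phi]
  have key : stdNormal (Ioi x) ≤ ENNReal.ofReal (Real.exp (-x + 1/2)) := by
    rw [stdNormal, gaussianReal_apply 0 one_ne_zero]
    calc ∫⁻ u in Ioi x, gaussianPDF 0 1 u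
        ≤ ∫⁻ u in Ioi x, ENNReal.ofReal (Real.exp (-x + 1/2) * gaussianPDFReal 1 1 u) := by
          refine setLIntegral_mono (ENNReal.measurable_ofReal.comp (measurable_const.mul (measurable_gaussianPDFReal _ _))) (fun u hu => ?_)
          rw [gaussianPDF]
          refine ENNReal.ofReal_le_ofReal ?_
          have h1 : gaussianPDFReal 0 1 u ≤ Real.exp (u - x) * gaussianPDFReal 0 1 u :=
            le_mul_of_one_le_left (gaussianPDFReal_nonneg 0 1 u)
              (Real.one_le_exp (by simpa using sub_nonneg.2 (le_of_lt (mem_Ioi.1 hu))))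
          have h2 := cs_lemma 1 0 one_ne_zero u
          simp only [one_mul, mul_zero, zero_add, NNReal.coe_one, mul_one, one_pow] at h2
          calc gaussianPDFReal 0 1 u ≤ Real.exp (u - x) * gaussianPDFReal 0 1 u := h1
            _ = Real.exp (-x) * (Real.exp u * gaussianPDFReal 0 1 u) := by
                rw [← mul_assoc, ← Real.exp_add]; ring_nf
            _ = Real.exp (-x + 1/2) * gaussianPDFReal 1 1 u := by
                rw [h2, ← mul_assoc, ← Real.exp_add]
      _ ≤ ∫⁻ u, ENNReal.ofReal (Real.exp (-x + 1/2) * gaussianPDFReal 1 1 u) :=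
          setLIntegral_le_lintegral _ _
      _ = ENNReal.ofReal (Real.exp (-x + 1/2)) := by
          simp_rw [ENNReal.ofReal_mul (Real.exp_nonneg _)]
          rw [lintegral_const_mul' _ _ ENNReal.ofReal_ne_top,
            lintegral_gaussianPDFReal_eq_one 1 one_ne_zero, mul_one]
  exact ENNReal.toReal_le_of_le_ofReal (Real.exp_nonneg _) key

section Main

variable {μ σ : ℝ}

lemma normCDF_pos (u : ℝ) : 0 < normCDF μ σ u := Phi_pos _
lemma normCDF_lt_one (u : ℝ) : normCDF μ σ u < 1 := Phi_lt_one _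
lemma measurable_normCDF : Measurable (normCDF μ σ) :=
  measurable_Phi.comp ((measurable_id.sub_const μ).div_const σ)

lemma measurable_pair (μ σ : ℝ) : Measurable (fun p : ℝ × ℝ =>
    (normCDF μ σ p.2 - (Ici p.1).indicator (fun _ => (1 : ℝ)) p.2) ^ 2) := by
  have h1 : Measurable fun p : ℝ × ℝ => (Ici p.1).indicator (fun _ => (1 : ℝ)) p.2 := by
    simp only [indicator_apply, mem_Ici]
    exact Measurable.ite (measurableSet_le measurable_fst measurable_snd)
      measurable_const measurable_const
  exact ((measurable_normCDF.comp measurable_snd).sub h1).pow_const 2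

/-- the integrand in `u`. -/
noncomputable def Gfun (μ σ y : ℝ) (u : ℝ) : ℝ :=
  (normCDF μ σ u - (Ici y).indicator (fun _ => (1 : ℝ)) u) ^ 2

lemma Gfun_nonneg (μ σ y u : ℝ) : 0 ≤ Gfun μ σ y u := sq_nonneg _

lemma Gfun_pos (μ σ y u : ℝ) : 0 < Gfun μ σ y u := by
  rw [Gfun]
  have h0 := normCDF_pos (μ := μ) (σ := σ) u
  have h1 := normCDF_lt_one (μ := μ) (σ := σ) u
  by_cases h : u ∈ Ici y
  · rw [indicator_of_mem h]
    have : normCDF μ σ u - 1 ≠ 0 := by linarith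
    positivity
  · rw [indicator_of_notMem h]
    have : normCDF μ σ u - 0 ≠ 0 := by simpa using h0.ne'
    positivity

lemma measurable_Gfun (μ σ y : ℝ) : Measurable (Gfun μ σ y) :=
  (measurable_normCDF.sub (measurable_const.indicator measurableSet_Ici)).pow_const 2

/-- bound for the integrand -/
noncomputable def bnd (μ σ s y : ℝ) (u : ℝ) : ℝ :=
  (Ico s y).indicator (fun u => Real.exp ((u - μ) / σ + 1/2)) u
    + Real.exp (-((u - μ) / σ) + 1/2)

lemma bnd_integrableOn (hσ : 0 < σ) (s y : ℝ) : IntegrableOn (bnd μ σ s y) (Ici s) := by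
  apply Integrable.add
  · have hf : IntegrableOn (fun u => Real.exp ((u - μ) / σ + 1/2)) (Ico s y) :=
      ((Real.continuous_exp.comp (by continuity)).integrableOn_Icc).mono_set
        Ico_subset_Icc_self
    exact (hf.integrable_indicator measurableSet_Ico).integrableOn
  · have heq : (fun u => Real.exp (-((u - μ) / σ) + 1/2))
        = fun u => Real.exp (μ / σ + 1/2) * Real.exp (-(1/σ) * u) := by
      funext u
      rw [← Real.exp_add]
      congr 1
      field_simp
      ring
    rw [heq]
    refine Integrable.const_mul ?_ _
    show IntegrableOn _ (Ici s) _
    exact (integrableOn_Ici_iff_integrableOn_Ioi).2 (exp_neg_integrableOn_Ioi s (by positivity))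

lemma Gfun_le_bnd (s y : ℝ) (u : ℝ) (hu : u ∈ Ici s) : Gfun μ σ y u ≤ bnd μ σ s y u := by
  have h0 := normCDF_pos (μ := μ) (σ := σ) u
  have h1 := normCDF_lt_one (μ := μ) (σ := σ) u
  have hFle : normCDF μ σ u ≤ Real.exp ((u - μ) / σ + 1/2) := Phi_le _
  have h1Fle : 1 - normCDF μ σ u ≤ Real.exp (-((u - μ) / σ) + 1/2) := by
    have := one_sub_Phi_le ((u - μ) / σ); simpa [normCDF] using this
  rw [Gfun, bnd]
  by_cases h : y ≤ u
  · rw [indicator_of_mem (mem_Ici.2 h), indicator_of_notMem (by simp [mem_Ico, h])]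
    have : (normCDF μ σ u - 1) ^ 2 ≤ 1 - normCDF μ σ u := by nlinarith
    linarith
  · rw [indicator_of_notMem (by simpa using h),
      indicator_of_mem (mem_Ico.2 ⟨mem_Ici.1 hu, lt_of_not_ge h⟩)]
    have hexp : (0:ℝ) < Real.exp (-((u - μ) / σ) + 1/2) := Real.exp_pos _
    have : (normCDF μ σ u - 0) ^ 2 ≤ normCDF μ σ u := by nlinarith
    simp only [sub_zero] at this
    linarith

lemma Gfun_integrableOn (hσ : 0 < σ) (s y : ℝ) : IntegrableOn (Gfun μ σ y) (Ici s) := by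
  refine (bnd_integrableOn (μ := μ) hσ s y).mono' ((measurable_Gfun μ σ y).aestronglyMeasurable) ?_
  refine (ae_restrict_iff' measurableSet_Ici).2 (ae_of_all _ fun u hu => ?_)
  rw [Real.norm_eq_abs, abs_of_nonneg (Gfun_nonneg μ σ y u)]
  exact Gfun_le_bnd s y u hu

end Main

section Main2
variable {μ σ : ℝ}

variable {μ σ : ℝ}

lemma twCRPS_gamma1 (s y : ℝ) :
    twCRPS (gamma1 s) (normCDF μ σ) y = ∫ u in Ici s, Gfun μ σ y u := by
  rw [twCRPS, gamma1_eq]; rfl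

lemma twCRPS_nonneg (s y : ℝ) : 0 ≤ twCRPS (gamma1 s) (normCDF μ σ) y := by
  rw [twCRPS_gamma1]
  exact integral_nonneg (fun u => Gfun_nonneg μ σ y u)

lemma exp_Ico_le (hσ : 0 < σ) (s y : ℝ) :
    ∫ u in Ico s y, Real.exp ((u - μ) / σ + 1/2)
      ≤ σ * Real.exp ((y - μ) / σ + 1/2) := by
  rcases le_or_gt y s with h | h
  · rw [Ico_eq_empty (by exact fun hlt => absurd h (not_le.2 hlt)), Measure.restrict_empty,
      integral_zero_measure]
    positivity
  · have hfun : ∀ u : ℝ, Real.exp ((u - μ) / σ + 1/2)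
        = (fun x => Real.exp (x + (-(μ/σ) + 1/2))) (u / σ) := by
      intro u; congr 1; rw [sub_div]; ring
    have hIoc : ∫ u in Ico s y, Real.exp ((u - μ) / σ + 1/2)
        = ∫ u in s..y, Real.exp ((u - μ) / σ + 1/2) := by
      rw [intervalIntegral.integral_of_le h.le, integral_Ioc_eq_integral_Ioo,
        ← integral_Ico_eq_integral_Ioo]
    rw [hIoc]
    simp_rw [hfun]
    rw [intervalIntegral.integral_comp_div (f := fun x => Real.exp (x + (-(μ/σ) + 1/2)))
      hσ.ne']
    simp_rw [Real.exp_add, intervalIntegral.integral_mul_const, integral_exp]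
    rw [smul_eq_mul]
    nlinarith [mul_pos (mul_pos hσ (Real.exp_pos (s/σ)))
      (mul_pos (Real.exp_pos (-(μ/σ))) (Real.exp_pos (1/2)))]

lemma twCRPS_le (hσ : 0 < σ) (s y : ℝ) :
    twCRPS (gamma1 s) (normCDF μ σ) y
      ≤ σ * Real.exp ((y - μ) / σ + 1/2)
        + ∫ u in Ici s, Real.exp (-((u - μ) / σ) + 1/2) := by
  rw [twCRPS_gamma1]
  have h1 : IntegrableOn ((Ico s y).indicator fun u => Real.exp ((u - μ) / σ + 1/2)) (Ici s)
      volume := by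
    have hf : IntegrableOn (fun u => Real.exp ((u - μ) / σ + 1/2)) (Ico s y) :=
      ((Real.continuous_exp.comp (by continuity)).integrableOn_Icc).mono_set
        Ico_subset_Icc_self
    exact (hf.integrable_indicator measurableSet_Ico).integrableOn
  have h2 : IntegrableOn (fun u => Real.exp (-((u - μ) / σ) + 1/2)) (Ici s) volume := by
    have heq : (fun u => Real.exp (-((u - μ) / σ) + 1/2))
        = fun u => Real.exp (μ / σ + 1/2) * Real.exp (-(1/σ) * u) := by
      funext u
      rw [← Real.exp_add]
      congr 1
      field_simp
      ring
    rw [heq]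
    refine Integrable.const_mul ?_ _
    show IntegrableOn _ (Ici s) _
    exact (integrableOn_Ici_iff_integrableOn_Ioi).2 (exp_neg_integrableOn_Ioi s (by positivity))
  calc ∫ u in Ici s, Gfun μ σ y u ≤ ∫ u in Ici s, bnd μ σ s y u :=
        setIntegral_mono_on (Gfun_integrableOn hσ s y) (bnd_integrableOn hσ s y)
          measurableSet_Ici (fun u hu => Gfun_le_bnd s y u hu)
    _ = (∫ u in Ici s, ((Ico s y).indicator fun u => Real.exp ((u - μ) / σ + 1/2)) u)
        + ∫ u in Ici s, Real.exp (-((u - μ) / σ) + 1/2) := integral_add h1 h2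
    _ ≤ σ * Real.exp ((y - μ) / σ + 1/2) + ∫ u in Ici s, Real.exp (-((u - μ) / σ) + 1/2) := by
        refine add_le_add_left ?_ _
        rw [integral_indicator measurableSet_Ico, Measure.restrict_restrict measurableSet_Ico,
          inter_eq_left.2 Ico_subset_Ici_self]
        exact exp_Ico_le hσ s y

lemma integrable_exp_gaussian (c m : ℝ) {v : ℝ≥0} (hv : v ≠ 0) :
    Integrable (fun y => Real.exp (c * y)) (gaussianReal m v) := by
  rw [gaussianReal_of_var_ne_zero _ hv,
    integrable_withDensity_iff (measurable_gaussianPDF _ _)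
      (ae_of_all _ fun x => ENNReal.ofReal_lt_top)]
  have h : (fun y => Real.exp (c * y) * ((gaussianPDF m v y).toReal))
      = fun y => Real.exp (c*m + c^2*(v:ℝ)/2) * gaussianPDFReal (m + c*v) v y := by
    funext y
    rw [gaussianPDF, ENNReal.toReal_ofReal (gaussianPDFReal_nonneg _ _ _)]
    exact cs_lemma c m hv y
  rw [h]
  exact (integrable_gaussianPDFReal _ _).const_mul _

lemma stronglyMeasurable_T (μ σ s : ℝ) :
    StronglyMeasurable (fun y => twCRPS (gamma1 s) (normCDF μ σ) y) := by
  have : (fun y => twCRPS (gamma1 s) (normCDF μ σ) y)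
      = fun y => ∫ u, Gfun μ σ y u ∂(volume.restrict (Ici s)) := by
    funext y; rw [twCRPS_gamma1]
  rw [this]
  exact ((measurable_pair μ σ).stronglyMeasurable).integral_prod_right'

lemma sigma_sq_ne_zero (hσ : 0 < σ) : (⟨σ ^ 2, sq_nonneg σ⟩ : ℝ≥0) ≠ 0 := by
  intro h
  replace h : σ ^ 2 = 0 := congrArg Subtype.val h
  exact absurd h (by positivity)

lemma integrable_T (hσ : 0 < σ) (s : ℝ) :
    Integrable (fun y => twCRPS (gamma1 s) (normCDF μ σ) y) (gaussMeasure μ σ) := by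
  have hv := sigma_sq_ne_zero hσ
  set D := ∫ u in Ici s, Real.exp (-((u - μ) / σ) + 1/2) with hD
  have hB : Integrable (fun y => σ * Real.exp ((y - μ) / σ + 1/2) + D) (gaussMeasure μ σ) := by
    haveI : IsProbabilityMeasure (gaussMeasure μ σ) := by rw [gaussMeasure]; exact instIsProbabilityMeasureGaussianReal _ _
    refine Integrable.add ?_ (integrable_const D)
    have : (fun y => σ * Real.exp ((y - μ) / σ + 1/2))
        = fun y => (σ * Real.exp (-(μ/σ) + 1/2)) * Real.exp ((1/σ) * y) := by
      funext y
      rw [mul_assoc, ← Real.exp_add]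
      congr 2
      rw [sub_div]; ring
    rw [this, gaussMeasure]
    exact (integrable_exp_gaussian (1/σ) μ hv).const_mul _
  refine hB.mono' (stronglyMeasurable_T μ σ s).aestronglyMeasurable (ae_of_all _ fun y => ?_)
  rw [Real.norm_eq_abs, abs_of_nonneg (twCRPS_nonneg s y)]
  exact twCRPS_le hσ s y


end Main2

section Final
variable {σ : ℝ}

variable {σ : ℝ}

lemma Gfun_shift (μ σ y c x : ℝ) : Gfun (μ + c) σ (y + c) (x + c) = Gfun μ σ y x := by
  rw [Gfun, Gfun]
  have h1 : normCDF (μ + c) σ (x + c) = normCDF μ σ x := by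
    rw [normCDF, normCDF]
    congr 2
    ring
  have h2 : (Ici (y + c)).indicator (fun _ => (1:ℝ)) (x + c)
      = (Ici y).indicator (fun _ => (1:ℝ)) x := by
    simp only [indicator_apply, mem_Ici, add_le_add_iff_right]
  rw [h1, h2]

lemma twCRPS_shift (hσ : 0 < σ) (μ c t y : ℝ) :
    twCRPS (gamma1 t) (normCDF (μ + c) σ) (y + c)
      = twCRPS (gamma1 (t - c)) (normCDF μ σ) y := by
  rw [twCRPS_gamma1, twCRPS_gamma1]
  have hmp : MeasurePreserving (fun x : ℝ => x + c) volume volume :=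
    measurePreserving_add_right volume c
  have hmap : (volume : Measure ℝ) = Measure.map (fun x : ℝ => x + c) volume := hmp.map_eq.symm
  calc ∫ u in Ici t, Gfun (μ + c) σ (y + c) u
      = ∫ u in Ici t, Gfun (μ + c) σ (y + c) u ∂(Measure.map (fun x : ℝ => x + c) volume) := by
        rw [← hmap]
    _ = ∫ x in (fun x : ℝ => x + c) ⁻¹' (Ici t), Gfun (μ + c) σ (y + c) (x + c) := by
        rw [setIntegral_map measurableSet_Ici
          ((measurable_Gfun _ _ _).aestronglyMeasurable) hmp.measurable.aemeasurable]
    _ = ∫ x in Ici (t - c), Gfun μ σ y x := by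
        rw [preimage_add_const_Ici]
        congr 1
        funext x
        exact Gfun_shift μ σ y c x

lemma twCRPS_split (hσ : 0 < σ) {μ c : ℝ} (hc : 0 < c) (t y : ℝ) :
    twCRPS (gamma1 (t - c)) (normCDF μ σ) y
      = twCRPS (gamma1 t) (normCDF μ σ) y + ∫ u in Ico (t - c) t, Gfun μ σ y u := by
  rw [twCRPS_gamma1, twCRPS_gamma1]
  have hun : Ico (t - c) t ∪ Ici t = Ici (t - c) := Ico_union_Ici_eq_Ici (by linarith)
  have hdisj : Disjoint (Ico (t - c) t) (Ici t) := by
    refine disjoint_left.2 fun x hx hx' => ?_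
    exact absurd (mem_Ici.1 hx') (not_le.2 (mem_Ico.1 hx).2)
  rw [← hun, setIntegral_union hdisj measurableSet_Ici
    ((Gfun_integrableOn hσ (t - c) y).mono_set Ico_subset_Ici_self)
    ((Gfun_integrableOn hσ (t - c) y).mono_set (Ici_subset_Ici.2 (by linarith)))]
  ring

lemma diff_pos (hσ : 0 < σ) {μ c : ℝ} (hc : 0 < c) (t y : ℝ) :
    0 < ∫ u in Ico (t - c) t, Gfun μ σ y u := by
  have hint : IntegrableOn (Gfun μ σ y) (Ico (t - c) t) :=
    (Gfun_integrableOn hσ (t - c) y).mono_set Ico_subset_Ici_self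
  rw [setIntegral_pos_iff_support_of_nonneg_ae
    (ae_of_all _ fun u => Gfun_nonneg μ σ y u) hint]
  have hsupp : Function.support (Gfun μ σ y) = univ :=
    eq_univ_of_forall fun u => (Gfun_pos μ σ y u).ne'
  rw [hsupp, univ_inter, Real.volume_Ico]
  simp only [ENNReal.ofReal_pos]
  linarith


end Final
end Helpers

theorem stmt_16 (σ t : ℝ) (hσ : 0 < σ) :
    ∀ μ μ' : ℝ, μ < μ' → etwCRPS (gamma1 t) μ σ < etwCRPS (gamma1 t) μ' σ := by
  intro μ μ' hlt
  set c := μ' - μ with hc_def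
  have hc : 0 < c := by simp [hc_def]; linarith
  haveI : IsProbabilityMeasure (gaussMeasure μ σ) := by rw [gaussMeasure]; exact instIsProbabilityMeasureGaussianReal _ _
  have hmap : gaussMeasure μ' σ = Measure.map (fun y : ℝ => y + c) (gaussMeasure μ σ) := by
    rw [gaussMeasure, gaussMeasure]; erw [gaussianReal_map_add_const c]
    congr 1
    rw [hc_def]; ring
  have step1 : etwCRPS (gamma1 t) μ' σ
      = ∫ y, twCRPS (gamma1 (t - c)) (normCDF μ σ) y ∂(gaussMeasure μ σ) := by
    rw [etwCRPS, hmap, integral_map (measurable_id'.add_const c).aemeasurable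
      ((stronglyMeasurable_T μ' σ t).aestronglyMeasurable)]
    congr 1
    funext y
    have := twCRPS_shift hσ μ c t y
    rwa [show μ + c = μ' by rw [hc_def]; ring] at this
  have hTt := integrable_T (μ := μ) hσ t
  have hTtc := integrable_T (μ := μ) hσ (t - c)
  rw [step1, etwCRPS, ← sub_pos, ← integral_sub hTtc hTt]
  have hpos : ∀ y, 0 < twCRPS (gamma1 (t - c)) (normCDF μ σ) y
      - twCRPS (gamma1 t) (normCDF μ σ) y := by
    intro y
    rw [twCRPS_split hσ hc t y]
    have := diff_pos hσ (μ := μ) hc t y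
    linarith
  rw [integral_pos_iff_support_of_nonneg (fun y => (hpos y).le)
    (hTtc.sub hTt)]
  have hsupp : Function.support (fun y => twCRPS (gamma1 (t - c)) (normCDF μ σ) y
      - twCRPS (gamma1 t) (normCDF μ σ) y) = univ :=
    eq_univ_of_forall fun y => (hpos y).ne'
  rw [hsupp, measure_univ]
  exact zero_lt_one
end
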